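/- arXiv:0809.0143 — 5 statements merged into one kernel-verified Lean document; each statement's English description precedes it below -/
import Mathlib

section
/- Let φ : sl₃(ℂ) → sl₃(ℂ) be a ℂ-linear map such that φ ∘ φ = id and φ(g X g⁻¹) = (ₜg)⁻¹ φ(X) (ₜg) for every g ∈ GL₃(ℂ) and every X ∈ sl₃(ℂ). Then either φ(X) = ₜX for all X ∈ sl₃(ℂ), or φ(X) = −ₜX for all X ∈ sl₃(ℂ). -/
/-!
Composing `φ` with the other transpose gives `ψ = ₜ ∘ φ`, which commutes with conjugation by
`GL₃(ℂ)` because `ₜ(g h) = ₜh ₜg` and `ₜₜ = id`. Conjugation by diagonal matrices forces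
`ψ E₀₁ = c • E₀₁`. The `c`-eigenspace of `ψ` is then a conjugation-stable subspace of `sl₃(ℂ)`
containing `E₀₁`, and conjugating by transvections shows that such a subspace contains every
`Eᵢⱼ` (`i ≠ j`) and every `Eᵢᵢ - Eⱼⱼ`, hence all of `sl₃(ℂ)`. So `φ = c • ₜ`, and `φ ∘ φ = id`
gives `c² = 1`.
-/

open Matrix

noncomputable section

def J3 : Matrix (Fin 3) (Fin 3) ℂ := !![0,0,1; 0,1,0; 1,0,0]

def sl3 : Submodule ℂ (Matrix (Fin 3) (Fin 3) ℂ) :=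
  LinearMap.ker (Matrix.traceLinearMap (Fin 3) ℂ ℂ)

namespace Matrix

local notation "𝔰𝔩(" n ", " K ")" => LinearMap.ker (traceLinearMap n K K)

variable {n K : Type*} [Fintype n] [DecidableEq n]

section CommRing

variable [CommRing K]

def transvectionGL {i j : n} (hij : i ≠ j) (c : K) : GL n K :=
  ⟨transvection i j c, transvection i j (-c),
    by rw [transvection_mul_transvection_same _ _ hij, add_neg_cancel, transvection_zero],
    by rw [transvection_mul_transvection_same _ _ hij, neg_add_cancel, transvection_zero]⟩

@[simp]
theorem coe_transvectionGL {i j : n} (hij : i ≠ j) (c : K) :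
    (transvectionGL hij c : Matrix n n K) = transvection i j c := rfl

@[simp]
theorem coe_transvectionGL_inv {i j : n} (hij : i ≠ j) (c : K) :
    ((transvectionGL hij c)⁻¹ : GL n K) = (transvection i j (-c) : Matrix n n K) := rfl

def diagonalGL (d : n → Kˣ) : GL n K :=
  ⟨diagonal fun k ↦ (d k : K), diagonal fun k ↦ (↑(d k)⁻¹ : K),
    by simp [diagonal_mul_diagonal], by simp [diagonal_mul_diagonal]⟩

@[simp]
theorem coe_diagonalGL (d : n → Kˣ) :
    (diagonalGL d : Matrix n n K) = diagonal fun k ↦ (d k : K) := rfl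

@[simp]
theorem coe_diagonalGL_inv (d : n → Kˣ) :
    ((diagonalGL d)⁻¹ : GL n K) = (diagonal fun k ↦ (↑(d k)⁻¹ : K) : Matrix n n K) := rfl

theorem diagonal_mul_single_mul_diagonal (d e : n → K) (i j : n) (c : K) :
    diagonal d * single i j c * diagonal e = single i j (d i * c * e j) := by
  ext k l
  by_cases h : i = k ∧ j = l
  · obtain ⟨rfl, rfl⟩ := h
    simp [mul_diagonal]
  · simp [mul_diagonal, single_apply_of_ne (h := h)]

def IsConjInvariant (W : Submodule K (Matrix n n K)) : Prop :=
  ∀ (g : GL n K), ∀ X ∈ W, (g : Matrix n n K) * X * ((g⁻¹ : GL n K) : Matrix n n K) ∈ W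

namespace IsConjInvariant

variable {W : Submodule K (Matrix n n K)} (hW : IsConjInvariant W) {i j : n}
include hW

theorem single_mem_of_row (h : single i j 1 ∈ W) {k : n} (hki : k ≠ i) (hkj : k ≠ j) :
    single k j 1 ∈ W := by
  have hconj : transvection k i 1 * single i j 1 * transvection k i (-1) =
      single i j (1 : K) + single k j 1 := by
    simp [transvection, add_mul, mul_add, hkj.symm]
  have := hW (transvectionGL hki 1) _ h
  rw [coe_transvectionGL, coe_transvectionGL_inv, hconj] at this
  simpa using W.sub_mem this h

theorem single_mem_of_col (h : single i j 1 ∈ W) {l : n} (hlj : l ≠ j) (hli : l ≠ i) :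
    single i l 1 ∈ W := by
  have hconj : transvection j l 1 * single i j 1 * transvection j l (-1) =
      single i j (1 : K) - single i l 1 := by
    simp [transvection, add_mul, mul_add, hli, sub_eq_add_neg, single_neg]
  have := hW (transvectionGL hlj.symm 1) _ h
  rw [coe_transvectionGL, coe_transvectionGL_inv, hconj] at this
  simpa using W.sub_mem h this

theorem single_sub_single_mem (hij : i ≠ j) (h : single i j 1 ∈ W) (h' : single j i 1 ∈ W) :
    single i i 1 - single j j 1 ∈ W := by
  have hconj : transvection i j 1 * single j i 1 * transvection i j (-1) =
      single j i (1 : K) + (single i i 1 - single j j 1) - single i j 1 := by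
    simp only [transvection, add_mul, mul_add, one_mul, mul_one, single_mul_single_same,
      mul_neg]
    simp [← single_neg]
    abel
  have := hW (transvectionGL hij 1) _ h'
  rw [coe_transvectionGL, coe_transvectionGL_inv, hconj] at this
  simpa using W.sub_mem (W.add_mem this h) h'

end IsConjInvariant

theorem ker_trace_le_of_single_mem {W : Submodule K (Matrix n n K)}
    (hoff : ∀ i j, i ≠ j → single i j 1 ∈ W)
    (hdiag : ∀ i j, i ≠ j → single i i 1 - single j j 1 ∈ W) : 𝔰𝔩(n, K) ≤ W := by
  intro X hX
  rcases isEmpty_or_nonempty n with hn | ⟨⟨i₀⟩⟩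
  · simp [Subsingleton.elim X 0]
  have htr : ∑ i, X i i = 0 := hX
  have hdecomp : X = ∑ i, ∑ j,
      X i j • (single i j 1 - if i = j then single i₀ i₀ (1 : K) else 0) := by
    simp only [smul_sub, Finset.sum_sub_distrib, smul_ite, smul_zero, Finset.sum_ite_eq,
      Finset.mem_univ, if_true, ← Finset.sum_smul, htr, zero_smul, sub_zero]
    simpa [smul_single] using matrix_eq_sum_single X
  rw [hdecomp]
  refine W.sum_mem fun i _ ↦ W.sum_mem fun j _ ↦ W.smul_mem _ ?_
  by_cases hij : i = j
  · subst hij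
    by_cases hi : i = i₀
    · simp [hi]
    · simpa using hdiag i i₀ hi
  · simpa [hij] using hoff i j hij

def singleKerTrace {i j : n} (hij : i ≠ j) (c : K) : 𝔰𝔩(n, K) :=
  ⟨single i j c, trace_single_eq_of_ne i j c hij⟩

@[simp]
theorem coe_singleKerTrace {i j : n} (hij : i ≠ j) (c : K) :
    (singleKerTrace hij c : Matrix n n K) = single i j c := rfl

theorem conj_mem_ker_trace (g : GL n K) {X : Matrix n n K} (hX : X ∈ 𝔰𝔩(n, K)) :
    (g : Matrix n n K) * X * ((g⁻¹ : GL n K) : Matrix n n K) ∈ 𝔰𝔩(n, K) := by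
  have hX' : trace X = 0 := hX
  change trace _ = 0
  rw [trace_mul_cycle, ← Units.val_mul, inv_mul_cancel, Units.val_one, one_mul, hX']

def IsConjEquivariant (ψ : Module.End K (𝔰𝔩(n, K))) : Prop :=
  ∀ (g : GL n K) (X Y : 𝔰𝔩(n, K)),
    (Y : Matrix n n K) = g * X * ((g⁻¹ : GL n K) : Matrix n n K) →
      (ψ Y : Matrix n n K) = g * ψ X * ((g⁻¹ : GL n K) : Matrix n n K)

theorem IsConjEquivariant.isConjInvariant_map_eigenspace
    {ψ : Module.End K (𝔰𝔩(n, K))} (hψ : IsConjEquivariant ψ) (c : K) :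
    IsConjInvariant ((ψ.eigenspace c).map (𝔰𝔩(n, K)).subtype) := by
  rintro g _ ⟨X, hX, rfl⟩
  refine ⟨⟨_, conj_mem_ker_trace g X.2⟩, ?_, rfl⟩
  rw [SetLike.mem_coe, Module.End.mem_eigenspace_iff] at hX ⊢
  apply Subtype.ext
  rw [hψ g X _ rfl, hX]
  simp

end CommRing

section Field

variable [Field K]

theorem apply_eq_zero_of_diagonal_conj_eq_smul {d : n → Kˣ} {s : K} {Y : Matrix n n K}
    (hY : diagonal (fun k ↦ (d k : K)) * Y * diagonal (fun k ↦ (↑(d k)⁻¹ : K)) = s • Y)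
    {k l : n} (hkl : (d k : K) / d l ≠ s) : Y k l = 0 := by
  have hkl' := congrFun (congrFun hY k) l
  simp only [diagonal_mul, mul_diagonal, smul_apply, smul_eq_mul,
    Units.val_inv_eq_inv_val] at hkl'
  have : ((d k : K) / d l - s) * Y k l = 0 := by linear_combination hkl'
  exact (mul_eq_zero.mp this).resolve_left (sub_ne_zero.mpr hkl)

theorem eq_smul_single_of_diagonal_conj [CharZero K] {i j : n} (hij : i ≠ j)
    {Y : Matrix n n K} (hY : ∀ d : n → Kˣ,
      diagonal (fun k ↦ (d k : K)) * Y * diagonal (fun k ↦ (↑(d k)⁻¹ : K)) =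
        ((d i : K) / d j) • Y) :
    Y = Y i j • single i j 1 := by
  have two : (2 : K) ≠ 0 := two_ne_zero
  ext k l
  by_cases hkl : k = i ∧ l = j
  · obtain ⟨rfl, rfl⟩ := hkl
    simp
  rw [smul_apply, single_apply_of_ne (h := fun h ↦ hkl ⟨h.1.symm, h.2.symm⟩), smul_zero]
  -- scaling one coordinate by `2` separates the weight `d i / d j` of `(i, j)` from `d k / d l`
  by_cases hk : k = i
  · subst hk
    have hl : l ≠ j := fun h ↦ hkl ⟨rfl, h⟩
    refine apply_eq_zero_of_diagonal_conj_eq_smul (hY (Function.update 1 j (Units.mk0 2 two))) ?_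
    simp [hl, hij]
  · refine apply_eq_zero_of_diagonal_conj_eq_smul (hY (Function.update 1 i (Units.mk0 2 two))) ?_
    by_cases hl : l = i <;> simp [hk, hl, hij.symm]; norm_num

end Field

theorem IsConjInvariant.ker_trace_le_of_single_zero_one_mem [CommRing K]
    {W : Submodule K (Matrix (Fin 3) (Fin 3) K)} (hW : IsConjInvariant W)
    (h01 : single 0 1 1 ∈ W) : 𝔰𝔩(Fin 3, K) ≤ W := by
  have h02 := hW.single_mem_of_col h01 (l := 2) (by decide) (by decide)
  have h21 := hW.single_mem_of_row h01 (k := 2) (by decide) (by decide)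
  have h12 := hW.single_mem_of_row h02 (k := 1) (by decide) (by decide)
  have h20 := hW.single_mem_of_col h21 (l := 0) (by decide) (by decide)
  have h10 := hW.single_mem_of_col h12 (l := 0) (by decide) (by decide)
  have hoff : ∀ i j : Fin 3, i ≠ j → single i j 1 ∈ W := by
    intro i j hij
    fin_cases i <;> fin_cases j <;> first | assumption | exact absurd rfl hij
  exact ker_trace_le_of_single_mem hoff fun i j hij ↦
    hW.single_sub_single_mem hij (hoff i j hij) (hoff j i hij.symm)

theorem IsConjEquivariant.exists_eq_smul [Field K] [CharZero K]
    {ψ : Module.End K (𝔰𝔩(Fin 3, K))} (hψ : IsConjEquivariant ψ) :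
    ∃ c : K, ∀ X, ψ X = c • X := by
  let E : 𝔰𝔩(Fin 3, K) := singleKerTrace (by decide : (0 : Fin 3) ≠ 1) 1
  have hE : (ψ E : Matrix (Fin 3) (Fin 3) K) =
      (ψ E : Matrix (Fin 3) (Fin 3) K) 0 1 • single 0 1 1 := by
    refine eq_smul_single_of_diagonal_conj (by decide) fun d ↦ ?_
    have hconj : (((d 0 : K) / d 1) • E : 𝔰𝔩(Fin 3, K)) =
        (diagonalGL d : Matrix (Fin 3) (Fin 3) K) * E * ((diagonalGL d)⁻¹ : GL (Fin 3) K) := by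
      rw [coe_diagonalGL, coe_diagonalGL_inv, coe_singleKerTrace, diagonal_mul_single_mul_diagonal]
      simp [E, smul_single, div_eq_mul_inv]
    have := (hψ (diagonalGL d) E _ hconj).symm
    rwa [coe_diagonalGL, coe_diagonalGL_inv, map_smul, Submodule.coe_smul] at this
  refine ⟨(ψ E : Matrix (Fin 3) (Fin 3) K) 0 1, fun X ↦ ?_⟩
  have hE_mem : single 0 1 1 ∈ (ψ.eigenspace _).map (𝔰𝔩(Fin 3, K)).subtype :=
    ⟨E, Module.End.mem_eigenspace_iff.mpr (Subtype.ext hE), rfl⟩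
  obtain ⟨Y, hY, hYX⟩ :=
    (hψ.isConjInvariant_map_eigenspace _).ker_trace_le_of_single_zero_one_mem hE_mem X.2
  obtain rfl : Y = X := Subtype.ext hYX
  exact Module.End.mem_eigenspace_iff.mp hY

end Matrix

/-- The other transpose `ₜA`. -/
def antiTranspose (A : Matrix (Fin 3) (Fin 3) ℂ) : Matrix (Fin 3) (Fin 3) ℂ := J3 * Aᵀ * J3

theorem J3_mul_J3 : J3 * J3 = 1 := by
  simp [J3, one_fin_three]

theorem transpose_J3 : J3ᵀ = J3 := by
  ext i j
  fin_cases i <;> fin_cases j <;> rfl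

theorem antiTranspose_antiTranspose (A : Matrix (Fin 3) (Fin 3) ℂ) :
    antiTranspose (antiTranspose A) = A := by
  simp only [antiTranspose, transpose_mul, transpose_J3, transpose_transpose, Matrix.mul_assoc,
    J3_mul_J3, Matrix.mul_one]
  rw [← Matrix.mul_assoc, J3_mul_J3, Matrix.one_mul]

theorem antiTranspose_mul (A B : Matrix (Fin 3) (Fin 3) ℂ) :
    antiTranspose (A * B) = antiTranspose B * antiTranspose A := by
  simp only [antiTranspose, transpose_mul, Matrix.mul_assoc]
  rw [← Matrix.mul_assoc J3 J3, J3_mul_J3, Matrix.one_mul]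

theorem antiTranspose_smul (c : ℂ) (A : Matrix (Fin 3) (Fin 3) ℂ) :
    antiTranspose (c • A) = c • antiTranspose A := by
  simp [antiTranspose]

theorem trace_antiTranspose (A : Matrix (Fin 3) (Fin 3) ℂ) :
    trace (antiTranspose A) = trace A := by
  rw [antiTranspose, trace_mul_cycle, J3_mul_J3, Matrix.one_mul, trace_transpose]

def antiTransposeSl3 : Module.End ℂ sl3 where
  toFun X := ⟨antiTranspose X, (trace_antiTranspose X).trans X.2⟩
  map_add' X Y := Subtype.ext <| by simp [antiTranspose, Matrix.mul_add, Matrix.add_mul]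
  map_smul' c X := Subtype.ext <| antiTranspose_smul c X

@[simp]
theorem coe_antiTransposeSl3 (X : sl3) :
    (antiTransposeSl3 X : Matrix (Fin 3) (Fin 3) ℂ) = antiTranspose X := rfl

theorem isConjEquivariant_antiTransposeSl3_comp {φ : Module.End ℂ sl3}
    (hφ : ∀ (g : GL (Fin 3) ℂ) (X Y : sl3),
      (Y : Matrix (Fin 3) (Fin 3) ℂ) =
          g * X * ((g⁻¹ : GL (Fin 3) ℂ) : Matrix (Fin 3) (Fin 3) ℂ) →
        (φ Y : Matrix (Fin 3) (Fin 3) ℂ) =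
          antiTranspose ((g⁻¹ : GL (Fin 3) ℂ) : Matrix (Fin 3) (Fin 3) ℂ) * φ X *
            antiTranspose g) :
    IsConjEquivariant (antiTransposeSl3 ∘ₗ φ) := by
  intro g X Y hY
  change antiTranspose (φ Y) =
    (g : Matrix (Fin 3) (Fin 3) ℂ) * antiTranspose (φ X) *
      ((g⁻¹ : GL (Fin 3) ℂ) : Matrix (Fin 3) (Fin 3) ℂ)
  rw [hφ g X Y hY, antiTranspose_mul, antiTranspose_mul, antiTranspose_antiTranspose,
    antiTranspose_antiTranspose, Matrix.mul_assoc]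

/-- A ℂ-linear involution `φ` of `sl₃(ℂ)` satisfying
`φ(g X g⁻¹) = (ₜg)⁻¹ φ(X) (ₜg)` for all `g ∈ GL₃(ℂ)` is either `X ↦ ₜX`
or `X ↦ −ₜX`, where `ₜA = J₃ ᵗA J₃`. -/
theorem stmt1 (φ : Module.End ℂ sl3)
    (hinv : φ ∘ₗ φ = LinearMap.id)
    (hequiv : ∀ (g : GL (Fin 3) ℂ) (X Y : sl3),
      (Y : Matrix (Fin 3) (Fin 3) ℂ) =
        (g : Matrix (Fin 3) (Fin 3) ℂ) * (X : Matrix (Fin 3) (Fin 3) ℂ) *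
          ((g⁻¹ : GL (Fin 3) ℂ) : Matrix (Fin 3) (Fin 3) ℂ) →
      (φ Y : Matrix (Fin 3) (Fin 3) ℂ) =
        (J3 * ((g⁻¹ : GL (Fin 3) ℂ) : Matrix (Fin 3) (Fin 3) ℂ)ᵀ * J3) *
          (φ X : Matrix (Fin 3) (Fin 3) ℂ) *
          (J3 * ((g : Matrix (Fin 3) (Fin 3) ℂ))ᵀ * J3)) :
    (∀ X : sl3, (φ X : Matrix (Fin 3) (Fin 3) ℂ) =
        J3 * (X : Matrix (Fin 3) (Fin 3) ℂ)ᵀ * J3) ∨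
    (∀ X : sl3, (φ X : Matrix (Fin 3) (Fin 3) ℂ) =
        -(J3 * (X : Matrix (Fin 3) (Fin 3) ℂ)ᵀ * J3)) := by
  obtain ⟨c, hc⟩ := (isConjEquivariant_antiTransposeSl3_comp hequiv).exists_eq_smul
  have hφ (X : sl3) : (φ X : Matrix (Fin 3) (Fin 3) ℂ) = c • antiTranspose X := by
    have h : antiTranspose (φ X) = c • (X : Matrix (Fin 3) (Fin 3) ℂ) :=
      congrArg Subtype.val (hc X)
    rw [← antiTranspose_antiTranspose (φ X), h, antiTranspose_smul]
  have hc2 : c * c = 1 := by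
    let E : sl3 := singleKerTrace (by decide : (0 : Fin 3) ≠ 1) 1
    have h := hφ (φ E)
    rw [← LinearMap.comp_apply, hinv, LinearMap.id_apply, hφ E, antiTranspose_smul,
      antiTranspose_antiTranspose, smul_smul] at h
    simpa [E] using (congrFun (congrFun h 0) 1).symm
  rcases mul_self_eq_one_iff.mp hc2 with rfl | rfl
  · exact Or.inl fun X ↦ by simpa [antiTranspose] using hφ X
  · exact Or.inr fun X ↦ by simpa [antiTranspose] using hφ X
end
end

section
/- Let μ ∈ ℂ with μ ≠ 0, let g = diag(μ, 1, μ⁻¹), and let r_μ : sl₃(ℂ) → sl₃(ℂ) be the ℂ-linear endomorphism r_μ(X) = g (ₜX) g⁻¹. Then, as an identity of polynomials in one variable x over ℂ, det(id − x·r_μ) = (1 − μ²x)(1 − μ⁻²x)(1 − μ²x²)(1 − μ⁻²x²)(1 − x²). -/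
/-!
In the coordinates `X₁₁, X₃₃ | X₁₂, X₂₃ | X₂₁, X₃₂ | X₁₃ | X₃₁` of `sl₃(ℂ)` (the remaining
diagonal entry is fixed by the trace), `r_μ` is block diagonal: reflecting over the anti-diagonal
swaps the two entries of each of the first three blocks and fixes `X₁₃` and `X₃₁`, while
conjugating by `diag(μ, 1, μ⁻¹)` multiplies `Xᵢⱼ` by `μ^(j-i)`. The blocks are
`[[0,1],[1,0]]`, `[[0,μ],[μ,0]]`, `[[0,μ⁻¹],[μ⁻¹,0]]`, `(μ²)` and `(μ⁻²)`, so `det(1 - x·r_μ)`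
is the product `(1 - x²)(1 - μ²x²)(1 - μ⁻²x²)(1 - μ²x)(1 - μ⁻²x)`.
-/

open Matrix

noncomputable section

namespace LinearMap

variable {R M N : Type*} [CommRing R] [AddCommGroup M] [Module R M] [AddCommGroup N] [Module R N]

theorem det_one_sub_smul_conj (e : M ≃ₗ[R] N) (f : Module.End R M) (x : R) :
    LinearMap.det (1 - x • e.conj f) = LinearMap.det (1 - x • f) := by
  have hconj : e.conj (1 - x • f) = 1 - x • e.conj f := by
    rw [map_sub, map_smul]
    exact congrArg (· - x • e.conj f) e.conj_id
  rw [← hconj, LinearEquiv.conj_apply, comp_assoc, det_conj]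

theorem det_one_sub_smul_prodMap [Module.Free R M] [Module.Finite R M] [Module.Free R N]
    [Module.Finite R N] (f : Module.End R M) (g : Module.End R N) (x : R) :
    LinearMap.det (1 - x • prodMap f g) = LinearMap.det (1 - x • f) * LinearMap.det (1 - x • g) :=
  det_prodMap (1 - x • f) (1 - x • g)

end LinearMap

theorem Matrix.det_one_sub_smul_toLin' {R n : Type*} [CommRing R] [Fintype n] [DecidableEq n]
    (A : Matrix n n R) (x : R) :
    LinearMap.det (1 - x • toLin' A) = (1 - x • A).det := by
  rw [← LinearMap.det_toLin' (1 - x • A), map_sub toLin', map_smul toLin', toLin'_one,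
    Module.End.one_eq_id]

theorem Matrix.det_one_sub_smul_of_antidiag {R : Type*} [CommRing R] (a b x : R) :
    (1 - x • !![0, a; b, 0]).det = 1 - a * b * x ^ 2 := by
  simp [det_fin_two]; ring

theorem Matrix.det_one_sub_smul_of_fin_one {R : Type*} [CommRing R] (c x : R) :
    (1 - x • !![c]).det = 1 - c * x := by
  simp [mul_comm]

theorem J3_mul_transpose_mul_J3 (X : Matrix (Fin 3) (Fin 3) ℂ) :
    J3 * Xᵀ * J3 = !![X 2 2, X 1 2, X 0 2; X 2 1, X 1 1, X 0 1; X 2 0, X 1 0, X 0 0] := by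
  ext i j
  fin_cases i <;> fin_cases j <;> simp [J3, mul_apply, Fin.sum_univ_three, vecMul, dotProduct]

theorem diagonal_mul_antiTranspose_mul_inv {μ : ℂ} (hμ : μ ≠ 0) (X : Matrix (Fin 3) (Fin 3) ℂ) :
    diagonal ![μ, 1, μ⁻¹] * (J3 * Xᵀ * J3) * (diagonal ![μ, 1, μ⁻¹])⁻¹ =
      !![X 2 2, μ * X 1 2, μ ^ 2 * X 0 2;
         μ⁻¹ * X 2 1, X 1 1, μ * X 0 1;
         μ⁻¹ ^ 2 * X 2 0, μ⁻¹ * X 1 0, X 0 0] := by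
  have hinv : (diagonal ![μ, 1, μ⁻¹])⁻¹ = diagonal ![μ⁻¹, 1, μ] := by
    refine inv_eq_left_inv ?_
    rw [diagonal_mul_diagonal, ← diagonal_one]
    congr 1
    ext i; fin_cases i <;> simp [hμ]
  rw [hinv, J3_mul_transpose_mul_J3]
  ext i j
  fin_cases i <;> fin_cases j <;> simp [diagonal_mul, mul_diagonal] <;> field_simp

abbrev Sl3Coords := (Fin 2 → ℂ) × (Fin 2 → ℂ) × (Fin 2 → ℂ) × (Fin 1 → ℂ) × (Fin 1 → ℂ)

def sl3EquivCoords : sl3 ≃ₗ[ℂ] Sl3Coords where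
  toFun X := (![X.1 0 0, X.1 2 2], ![X.1 0 1, X.1 1 2], ![X.1 1 0, X.1 2 1], ![X.1 0 2], ![X.1 2 0])
  map_add' X Y := by
    refine Prod.ext ?_ (Prod.ext ?_ (Prod.ext ?_ (Prod.ext ?_ ?_))) <;>
      funext i <;> fin_cases i <;> simp
  map_smul' c X := by
    refine Prod.ext ?_ (Prod.ext ?_ (Prod.ext ?_ (Prod.ext ?_ ?_))) <;>
      funext i <;> fin_cases i <;> simp
  invFun w := ⟨!![w.1 0, w.2.1 0, w.2.2.2.1 0;
      w.2.2.1 0, -(w.1 0 + w.1 1), w.2.1 1;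
      w.2.2.2.2 0, w.2.2.1 1, w.1 1], by simp [sl3, trace, Fin.sum_univ_three]⟩
  left_inv X := by
    have htr : X.1 0 0 + X.1 1 1 + X.1 2 2 = 0 := by
      simpa [sl3, trace, Fin.sum_univ_three] using X.2
    ext i j
    fin_cases i <;> fin_cases j <;> simp
    linear_combination -htr
  right_inv w := by
    refine Prod.ext ?_ (Prod.ext ?_ (Prod.ext ?_ (Prod.ext ?_ ?_))) <;>
      funext i <;> fin_cases i <;> simp

def twistBlocks (μ : ℂ) : Module.End ℂ Sl3Coords :=
  .prodMap (toLin' !![0, 1; 1, 0]) <| .prodMap (toLin' !![0, μ; μ, 0]) <|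
    .prodMap (toLin' !![0, μ⁻¹; μ⁻¹, 0]) <| .prodMap (toLin' !![μ ^ 2]) (toLin' !![μ⁻¹ ^ 2])

theorem sl3EquivCoords_conj_eq_twistBlocks {μ : ℂ} (hμ : μ ≠ 0) (r : Module.End ℂ sl3)
    (hr : ∀ X : sl3, (r X : Matrix (Fin 3) (Fin 3) ℂ) =
      diagonal ![μ, 1, μ⁻¹] * (J3 * (X : Matrix (Fin 3) (Fin 3) ℂ)ᵀ * J3) *
        (diagonal ![μ, 1, μ⁻¹])⁻¹) :
    sl3EquivCoords.conj r = twistBlocks μ := by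
  refine LinearMap.ext fun w => ?_
  obtain ⟨X, rfl⟩ := sl3EquivCoords.surjective w
  have hrX := diagonal_mul_antiTranspose_mul_inv hμ X ▸ hr X
  rw [LinearEquiv.conj_apply_apply, LinearEquiv.symm_apply_apply]
  refine Prod.ext ?_ (Prod.ext ?_ (Prod.ext ?_ (Prod.ext ?_ ?_))) <;>
    funext i <;> fin_cases i <;> simp [sl3EquivCoords, twistBlocks, hrX, mul_comm]

/-- For `g = diag(μ,1,μ⁻¹)` and `r_μ(X) = g (ₜX) g⁻¹` on `sl₃(ℂ)`,
`det(id − x·r_μ) = (1−μ²x)(1−μ⁻²x)(1−μ²x²)(1−μ⁻²x²)(1−x²)`. -/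
theorem stmt2 (μ : ℂ) (hμ : μ ≠ 0) (r : Module.End ℂ sl3)
    (hr : ∀ X : sl3, (r X : Matrix (Fin 3) (Fin 3) ℂ) =
      Matrix.diagonal ![μ, 1, μ⁻¹] *
        (J3 * (X : Matrix (Fin 3) (Fin 3) ℂ)ᵀ * J3) *
        (Matrix.diagonal ![μ, 1, μ⁻¹])⁻¹) :
    ∀ x : ℂ, LinearMap.det ((1 : Module.End ℂ sl3) - x • r) =
      (1 - μ ^ 2 * x) * (1 - μ⁻¹ ^ 2 * x) *
        (1 - μ ^ 2 * x ^ 2) * (1 - μ⁻¹ ^ 2 * x ^ 2) * (1 - x ^ 2) := by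
  intro x
  rw [← LinearMap.det_one_sub_smul_conj sl3EquivCoords, sl3EquivCoords_conj_eq_twistBlocks hμ r hr]
  simp only [twistBlocks, LinearMap.det_one_sub_smul_prodMap, det_one_sub_smul_toLin',
    det_one_sub_smul_of_antidiag, det_one_sub_smul_of_fin_one]
  ring
end
end

section
/- In the ring of formal power series in three variables X, T₁, T₂ over ℤ, the following identity holds: (∑ (∑_{i=0}^{min(m₁,m₂)} X^i) · X^{max(m₁,m₂)} · T₁^{m₁} T₂^{m₂}) · (1 − T₁T₂X)(1 − T₁T₂X²)(1 − T₁³X³)(1 − T₂³X³) = 1 − T₁³T₂³X⁶, where the sum ranges over all pairs of nonnegative integers (m₁, m₂) with m₁ − m₂ divisible by 3. -/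
open MvPowerSeries Finset

/-!
Write `u = T₁X` and `v = T₂X`. The series is the indicator series of the set of exponents
`(n, p, q)` of `Xⁿ T₁ᵖ T₂ᵠ` with `p ≡ q [MOD 3]` and `max p q ≤ n ≤ p + q`. Multiplying an
indicator series of a set `s` by `1 - m` removes from `s` its translate by the exponent of `m`,
so the first two factors cut the set down to the face `n = p + q` (the monomials `uᵖ vᵠ` with
`p ≡ q [MOD 3]`) and then to the two axes `{u³ᵏ}` and `{v³ᵏ}`. The remaining series is
`1 / (1 - u³) + 1 / (1 - v³) - 1`, and multiplying it by `(1 - u³)(1 - v³)` gives `1 - u³v³`.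
-/

namespace MvPowerSeries

variable {σ R : Type*}

noncomputable def indicatorSeries [Semiring R] (s : Set (σ →₀ ℕ)) : MvPowerSeries σ R :=
  s.indicator 1

section Semiring

variable [Semiring R]

theorem coeff_indicatorSeries (s : Set (σ →₀ ℕ)) (e : σ →₀ ℕ) :
    coeff e (indicatorSeries s : MvPowerSeries σ R) = s.indicator 1 e :=
  rfl

theorem indicatorSeries_union_add_inter (s t : Set (σ →₀ ℕ)) :
    (indicatorSeries (s ∪ t) : MvPowerSeries σ R) + indicatorSeries (s ∩ t) =
      indicatorSeries s + indicatorSeries t :=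
  Set.indicator_union_add_inter _ s t

theorem indicatorSeries_singleton_zero : (indicatorSeries {0} : MvPowerSeries σ R) = 1 := by
  classical
  ext e
  simp [coeff_indicatorSeries, Set.indicator_apply, coeff_one]

end Semiring

/-- The hypotheses say that `s` is the disjoint union of `t` and `d + s`. -/
theorem indicatorSeries_mul_one_sub_monomial [Ring R] {s t : Set (σ →₀ ℕ)} {d : σ →₀ ℕ}
    (hs : ∀ e, e ∈ s ↔ e ∈ t ∨ d ≤ e ∧ e - d ∈ s) (hdisj : ∀ e ∈ t, d ≤ e → e - d ∉ s) :
    (indicatorSeries s : MvPowerSeries σ R) * (1 - monomial d 1) = indicatorSeries t := by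
  classical
  ext e
  rw [mul_sub, mul_one, map_sub, coeff_mul_monomial, mul_one]
  simp only [coeff_indicatorSeries, Set.indicator_apply, Pi.one_apply]
  have hse := hs e
  have hte := hdisj e
  split_ifs <;> simp <;> tauto

end MvPowerSeries

theorem Finset.card_filter_range_add_eq (m k n : ℕ) :
    ((range (m + 1)).filter (fun i => i + k = n)).card = if k ≤ n ∧ n ≤ k + m then 1 else 0 := by
  split_ifs with h
  · rw [card_eq_one]
    exact ⟨n - k, by ext i; simp only [mem_filter, mem_range, mem_singleton]; omega⟩
  · rw [card_eq_zero, filter_eq_empty_iff]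
    intro i hi
    simp only [mem_range] at hi
    omega

noncomputable def expTriple (n p q : ℕ) : Fin 3 →₀ ℕ :=
  Finsupp.equivFunOnFinite.symm (![n, p, q] : Fin 3 → ℕ)

@[simp] theorem expTriple_apply_zero (n p q : ℕ) : expTriple n p q 0 = n := rfl

@[simp] theorem expTriple_apply_one (n p q : ℕ) : expTriple n p q 1 = p := rfl

@[simp] theorem expTriple_apply_two (n p q : ℕ) : expTriple n p q 2 = q := rfl

theorem expTriple_le_iff {n p q : ℕ} {e : Fin 3 →₀ ℕ} :
    expTriple n p q ≤ e ↔ n ≤ e 0 ∧ p ≤ e 1 ∧ q ≤ e 2 := by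
  simp [Finsupp.le_def, Fin.forall_fin_succ]

theorem monomial_expTriple {R : Type*} [Semiring R] (n p q : ℕ) :
    (monomial (expTriple n p q) 1 : MvPowerSeries (Fin 3) R) = X 0 ^ n * X 1 ^ p * X 2 ^ q := by
  simp only [X_pow_eq, monomial_mul_monomial, mul_one]
  congr 2
  ext i
  fin_cases i <;> simp [expTriple]

noncomputable def tripleSeries {R : Type*} [Semiring R] (P : ℕ → ℕ → ℕ → Prop) :
    MvPowerSeries (Fin 3) R :=
  indicatorSeries {e | P (e 0) (e 1) (e 2)}

section TripleSeries

variable {R : Type*}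

theorem coeff_tripleSeries [Semiring R] (P : ℕ → ℕ → ℕ → Prop) (e : Fin 3 →₀ ℕ)
    [Decidable (P (e 0) (e 1) (e 2))] :
    coeff e (tripleSeries P : MvPowerSeries (Fin 3) R) = if P (e 0) (e 1) (e 2) then 1 else 0 := by
  rw [tripleSeries, coeff_indicatorSeries, Set.indicator_apply]
  simp only [Set.mem_ofPred_eq, Pi.one_apply]

theorem tripleSeries_or_add_and [Semiring R] (P Q : ℕ → ℕ → ℕ → Prop) :
    (tripleSeries (fun n p q => P n p q ∨ Q n p q) : MvPowerSeries (Fin 3) R) +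
        tripleSeries (fun n p q => P n p q ∧ Q n p q) =
      tripleSeries P + tripleSeries Q :=
  indicatorSeries_union_add_inter _ _

theorem tripleSeries_zero [Semiring R] :
    (tripleSeries (fun n p q => n = 0 ∧ p = 0 ∧ q = 0) : MvPowerSeries (Fin 3) R) = 1 := by
  rw [← indicatorSeries_singleton_zero, tripleSeries]
  congr 1
  ext e
  simp [Finsupp.ext_iff, Fin.forall_fin_succ]

theorem tripleSeries_mul_one_sub [Ring R] {P Q : ℕ → ℕ → ℕ → Prop} {a b c : ℕ}
    (hQ : ∀ n p q, Q n p q ↔ P n p q ∨ a ≤ n ∧ b ≤ p ∧ c ≤ q ∧ Q (n - a) (p - b) (q - c))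
    (hdisj : ∀ n p q, P n p q → a ≤ n → b ≤ p → c ≤ q → ¬ Q (n - a) (p - b) (q - c)) :
    (tripleSeries Q : MvPowerSeries (Fin 3) R) * (1 - X 0 ^ a * X 1 ^ b * X 2 ^ c) =
      tripleSeries P := by
  rw [← monomial_expTriple]
  refine indicatorSeries_mul_one_sub_monomial (fun e => ?_) (fun e he hle => ?_)
  · simpa [expTriple_le_iff, and_assoc] using hQ (e 0) (e 1) (e 2)
  · rw [expTriple_le_iff] at hle
    simpa using hdisj _ _ _ he hle.1 hle.2.1 hle.2.2

end TripleSeries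

def InCone (n p q : ℕ) : Prop := p ≡ q [MOD 3] ∧ p ≤ n ∧ q ≤ n ∧ n ≤ p + q

def OnFace (n p q : ℕ) : Prop := p ≡ q [MOD 3] ∧ n = p + q

def OnAxis₁ (n p q : ℕ) : Prop := q = 0 ∧ 3 ∣ p ∧ n = p

def OnAxis₂ (n p q : ℕ) : Prop := p = 0 ∧ 3 ∣ q ∧ n = q

section Peeling

variable {R : Type*} [CommRing R]

theorem tripleSeries_inCone_mul :
    (tripleSeries InCone : MvPowerSeries (Fin 3) R) * (1 - X 1 * X 2 * X 0) =
      tripleSeries OnFace := by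
  rw [show (X 1 * X 2 * X 0 : MvPowerSeries (Fin 3) R) = X 0 ^ 1 * X 1 ^ 1 * X 2 ^ 1 by ring]
  refine tripleSeries_mul_one_sub (fun n p q => ?_) (fun n p q => ?_) <;>
    simp only [InCone, OnFace, Nat.ModEq] <;> omega

theorem tripleSeries_onFace_mul :
    (tripleSeries OnFace : MvPowerSeries (Fin 3) R) * (1 - X 1 * X 2 * X 0 ^ 2) =
      tripleSeries fun n p q => OnAxis₁ n p q ∨ OnAxis₂ n p q := by
  rw [show (X 1 * X 2 * X 0 ^ 2 : MvPowerSeries (Fin 3) R) = X 0 ^ 2 * X 1 ^ 1 * X 2 ^ 1 by ring]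
  refine tripleSeries_mul_one_sub (fun n p q => ?_) (fun n p q => ?_) <;>
    simp only [OnFace, OnAxis₁, OnAxis₂, Nat.ModEq] <;>
    rcases Nat.eq_zero_or_pos p with hp | hp <;> rcases Nat.eq_zero_or_pos q with hq | hq <;> omega

theorem tripleSeries_onAxis₁_mul :
    (tripleSeries OnAxis₁ : MvPowerSeries (Fin 3) R) * (1 - X 1 ^ 3 * X 0 ^ 3) = 1 := by
  rw [show (X 1 ^ 3 * X 0 ^ 3 : MvPowerSeries (Fin 3) R) = X 0 ^ 3 * X 1 ^ 3 * X 2 ^ 0 by ring]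
  refine (tripleSeries_mul_one_sub (fun n p q => ?_) (fun n p q => ?_)).trans tripleSeries_zero <;>
    simp only [OnAxis₁] <;> omega

theorem tripleSeries_onAxis₂_mul :
    (tripleSeries OnAxis₂ : MvPowerSeries (Fin 3) R) * (1 - X 2 ^ 3 * X 0 ^ 3) = 1 := by
  rw [show (X 2 ^ 3 * X 0 ^ 3 : MvPowerSeries (Fin 3) R) = X 0 ^ 3 * X 1 ^ 0 * X 2 ^ 3 by ring]
  refine (tripleSeries_mul_one_sub (fun n p q => ?_) (fun n p q => ?_)).trans tripleSeries_zero <;>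
    simp only [OnAxis₂] <;> omega

theorem tripleSeries_onAxis₁_or_onAxis₂ :
    (tripleSeries fun n p q => OnAxis₁ n p q ∨ OnAxis₂ n p q : MvPowerSeries (Fin 3) R) =
      tripleSeries OnAxis₁ + tripleSeries OnAxis₂ - 1 := by
  have hinter : (fun n p q => OnAxis₁ n p q ∧ OnAxis₂ n p q) =
      fun n p q => n = 0 ∧ p = 0 ∧ q = 0 := by
    ext n p q
    simp only [OnAxis₁, OnAxis₂]
    omega
  rw [← tripleSeries_or_add_and, hinter, tripleSeries_zero, add_sub_cancel_right]

end Peeling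

/-- In `ℤ[[X,T₁,T₂]]` (with `X = X 0`, `T₁ = X 1`, `T₂ = X 2`):
`(∑_{3 ∣ m₁−m₂} (∑_{i=0}^{min(m₁,m₂)} Xⁱ) X^{max(m₁,m₂)} T₁^{m₁} T₂^{m₂})
  ·(1−T₁T₂X)(1−T₁T₂X²)(1−T₁³X³)(1−T₂³X³) = 1 − T₁³T₂³X⁶`.
The series is encoded via its coefficients: the coefficient of
`X^n T₁^{m₁} T₂^{m₂}` is the number of `i` with `0 ≤ i ≤ min(m₁,m₂)` and
`i + max(m₁,m₂) = n`, provided `3 ∣ m₁ − m₂`, and `0` otherwise. -/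
theorem stmt3 (S : MvPowerSeries (Fin 3) ℤ)
    (hS : ∀ e : Fin 3 →₀ ℕ, MvPowerSeries.coeff e S =
      if (3 : ℤ) ∣ ((e 1 : ℤ) - (e 2 : ℤ)) then
        (((Finset.range (min (e 1) (e 2) + 1)).filter
            (fun i => i + max (e 1) (e 2) = e 0)).card : ℤ)
      else 0) :
    S * (1 - X 1 * X 2 * X 0) * (1 - X 1 * X 2 * (X 0) ^ 2) *
        (1 - (X 1) ^ 3 * (X 0) ^ 3) * (1 - (X 2) ^ 3 * (X 0) ^ 3) =
      1 - (X 1) ^ 3 * (X 2) ^ 3 * (X 0) ^ 6 := by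
  have hS_eq : S = tripleSeries InCone := by
    classical
    ext e
    rw [hS, coeff_tripleSeries, card_filter_range_add_eq]
    simp only [InCone, Nat.ModEq]
    split_ifs <;> omega
  calc S * (1 - X 1 * X 2 * X 0) * (1 - X 1 * X 2 * X 0 ^ 2) *
        (1 - X 1 ^ 3 * X 0 ^ 3) * (1 - X 2 ^ 3 * X 0 ^ 3)
      = (tripleSeries OnAxis₁ + tripleSeries OnAxis₂ - 1) *
          (1 - X 1 ^ 3 * X 0 ^ 3) * (1 - X 2 ^ 3 * X 0 ^ 3) := by
        rw [hS_eq, tripleSeries_inCone_mul, tripleSeries_onFace_mul,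
          tripleSeries_onAxis₁_or_onAxis₂]
    _ = tripleSeries OnAxis₁ * (1 - X 1 ^ 3 * X 0 ^ 3) * (1 - X 2 ^ 3 * X 0 ^ 3) +
          tripleSeries OnAxis₂ * (1 - X 2 ^ 3 * X 0 ^ 3) * (1 - X 1 ^ 3 * X 0 ^ 3) -
          (1 - X 1 ^ 3 * X 0 ^ 3) * (1 - X 2 ^ 3 * X 0 ^ 3) := by ring
    _ = 1 - X 1 ^ 3 * X 2 ^ 3 * X 0 ^ 6 := by
        rw [tripleSeries_onAxis₁_mul, tripleSeries_onAxis₂_mul]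
        ring
end

section
/- In the ring of formal power series in two variables X, T over ℤ, the following identity holds: (1 − X³)(1 − TX)(1 − TX²) · ∑_{k₁,k₂ ≥ 0} ∑_{i=0}^{min(k₁,k₂)} X^{k₁+2k₂} T^{k₁+k₂−2i} = 1. -/
/-!
Substituting `a = i`, `b = k₁ - i`, `c = k₂ - i` turns the sum into
`∑_{a,b,c ≥ 0} X^{3a} (TX)^b (TX²)^c`, the product of three geometric series. The factors are
peeled off one at a time: multiplying by `1 - TX²` leaves the terms with `c = 0`, i.e. the series
with coefficient `[m ≤ n ∧ 3 ∣ n - m]` at `X^n T^m`; multiplying that by `1 - TX` leaves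
`[m = 0 ∧ 3 ∣ n]`, and `1 - X³` then leaves `1`.
-/

open MvPowerSeries Finset

def exponentTriples (n m : ℕ) : Finset (ℕ × ℕ × ℕ) :=
  (range (n + 1) ×ˢ range (n + 1) ×ˢ range (n + 1)).filter
    (fun p => p.1 + 2 * p.2.1 = n ∧ p.2.2 ≤ min p.1 p.2.1 ∧ p.1 + p.2.1 = m + 2 * p.2.2)

theorem card_exponentTriples_filter_eq (n m : ℕ) :
    #((exponentTriples n m).filter (fun p => p.2.2 = p.2.1)) =
      if m ≤ n ∧ 3 ∣ n - m then 1 else 0 := by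
  split_ifs with h
  · rw [card_eq_one]
    refine ⟨(m + (n - m) / 3, (n - m) / 3, (n - m) / 3), ?_⟩
    ext ⟨k₁, k₂, i⟩
    simp only [exponentTriples, mem_filter, mem_product, mem_range, le_min_iff,
      mem_singleton, Prod.mk.injEq]
    omega
  · rw [card_eq_zero, filter_eq_empty_iff]
    rintro ⟨k₁, k₂, i⟩ hp
    simp only [exponentTriples, mem_filter, mem_product, mem_range, le_min_iff] at hp ⊢
    omega

theorem card_exponentTriples_filter_ne (n m : ℕ) :
    #((exponentTriples n m).filter (fun p => ¬p.2.2 = p.2.1)) =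
      if 2 ≤ n ∧ 1 ≤ m then #(exponentTriples (n - 2) (m - 1)) else 0 := by
  split_ifs with h
  · refine card_nbij' (fun p => (p.1, p.2.1 - 1, p.2.2)) (fun p => (p.1, p.2.1 + 1, p.2.2))
      ?_ ?_ ?_ ?_ <;>
    · rintro ⟨k₁, k₂, i⟩ hp
      simp only [exponentTriples, mem_coe, mem_filter, mem_product,
        mem_range, le_min_iff, Prod.mk.injEq, true_and, and_true] at hp ⊢
      omega
  · rw [card_eq_zero, filter_eq_empty_iff]
    rintro ⟨k₁, k₂, i⟩ hp
    simp only [exponentTriples, mem_filter, mem_product, mem_range, le_min_iff, not_not] at hp ⊢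
    omega

theorem card_exponentTriples (n m : ℕ) :
    #(exponentTriples n m) =
      (if 2 ≤ n ∧ 1 ≤ m then #(exponentTriples (n - 2) (m - 1)) else 0) +
        if m ≤ n ∧ 3 ∣ n - m then 1 else 0 := by
  rw [← card_exponentTriples_filter_ne, ← card_exponentTriples_filter_eq, add_comm,
    card_filter_add_card_filter_not]

section Series

variable {R : Type*} [Ring R]

def seriesOfCoeff (c : ℕ → ℕ → R) : MvPowerSeries (Fin 2) R := fun e => c (e 0) (e 1)

@[simp]
theorem coeff_seriesOfCoeff (c : ℕ → ℕ → R) (e : Fin 2 →₀ ℕ) :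
    coeff e (seriesOfCoeff c) = c (e 0) (e 1) :=
  rfl

theorem coeff_one_sub_X_pow_mul_X_pow_mul_seriesOfCoeff (a b : ℕ) (c : ℕ → ℕ → R)
    (e : Fin 2 →₀ ℕ) :
    coeff e ((1 - X 0 ^ a * X 1 ^ b) * seriesOfCoeff c) =
      c (e 0) (e 1) - if a ≤ e 0 ∧ b ≤ e 1 then c (e 0 - a) (e 1 - b) else 0 := by
  have hle : Finsupp.single 0 a + Finsupp.single 1 b ≤ e ↔ a ≤ e 0 ∧ b ≤ e 1 := by
    simp [Finsupp.le_def, Fin.forall_fin_two]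
  rw [X_pow_eq, X_pow_eq, monomial_mul_monomial, one_mul, sub_mul, one_mul, map_sub,
    coeff_monomial_mul]
  simp [hle]

theorem one_sub_X_pow_three_mul :
    (1 - X 0 ^ 3) * seriesOfCoeff (fun n m => if m = 0 ∧ 3 ∣ n then (1 : R) else 0) = 1 := by
  ext e
  have h := coeff_one_sub_X_pow_mul_X_pow_mul_seriesOfCoeff 3 0
    (fun n m => if m = 0 ∧ 3 ∣ n then (1 : R) else 0) e
  rw [pow_zero, mul_one] at h
  simp only [h, coeff_one, Finsupp.ext_iff, Fin.forall_fin_two, Finsupp.coe_zero, Pi.zero_apply]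
  split_ifs <;> first | omega | simp

theorem one_sub_X_mul_X_mul :
    (1 - X 0 * X 1) * seriesOfCoeff (fun n m => if m ≤ n ∧ 3 ∣ n - m then (1 : R) else 0) =
      seriesOfCoeff (fun n m => if m = 0 ∧ 3 ∣ n then 1 else 0) := by
  ext e
  have h := coeff_one_sub_X_pow_mul_X_pow_mul_seriesOfCoeff 1 1
    (fun n m => if m ≤ n ∧ 3 ∣ n - m then (1 : R) else 0) e
  rw [pow_one, pow_one] at h
  rw [h, coeff_seriesOfCoeff]
  split_ifs <;> first | omega | simp

theorem one_sub_X_pow_two_mul_X_mul :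
    (1 - X 0 ^ 2 * X 1) * seriesOfCoeff (fun n m => (#(exponentTriples n m) : R)) =
      seriesOfCoeff (fun n m => if m ≤ n ∧ 3 ∣ n - m then 1 else 0) := by
  ext e
  have h := coeff_one_sub_X_pow_mul_X_pow_mul_seriesOfCoeff 2 1
    (fun n m => (#(exponentTriples n m) : R)) e
  rw [pow_one] at h
  rw [h, coeff_seriesOfCoeff, card_exponentTriples]
  push_cast
  split_ifs <;> simp

end Series

/-- Here `X = X 0` and `T = X 1`. -/
theorem stmt5 (S : MvPowerSeries (Fin 2) ℤ)
    (hS : ∀ e : Fin 2 →₀ ℕ, MvPowerSeries.coeff e S =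
      (((Finset.range (e 0 + 1) ×ˢ Finset.range (e 0 + 1) ×ˢ Finset.range (e 0 + 1)).filter
          (fun p => p.1 + 2 * p.2.1 = e 0 ∧ p.2.2 ≤ min p.1 p.2.1 ∧
            p.1 + p.2.1 = e 1 + 2 * p.2.2)).card : ℤ)) :
    (1 - (X 0) ^ 3) * (1 - X 1 * X 0) * (1 - X 1 * (X 0) ^ 2) * S = 1 := by
  have hS_series : S = seriesOfCoeff (fun n m => (#(exponentTriples n m) : ℤ)) := by
    ext e
    exact hS e
  calc (1 - (X 0) ^ 3) * (1 - X 1 * X 0) * (1 - X 1 * (X 0) ^ 2) * S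
      = (1 - X 0 ^ 3) * ((1 - X 0 * X 1) * ((1 - X 0 ^ 2 * X 1) * S)) := by ring
    _ = 1 := by
      rw [hS_series, one_sub_X_pow_two_mul_X_mul, one_sub_X_mul_X_mul, one_sub_X_pow_three_mul]
end

section
/- Let F be a field, ρ ∈ F, and let M = M(T₁,T₂,a,b,c,d,e,f,g,h,i,j,k,l) be the 8×8 matrix over F described in the context. Then M v_ρ = 0 if and only if the parameters satisfy T₂ = 2T₁, b = −ρd, c = −ρe, g = ρa, i = −ρl, and j = −ρh. -/
open Matrix

noncomputable section

/-- The vector `v_ρ = (0,0,1,0,0,ρ,0,0)ᵗ`. -/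
def vrho (F : Type*) [Field F] (ρ : F) : Fin 8 → F := ![0, 0, 1, 0, 0, ρ, 0, 0]

/-- The general element of the Lie algebra of split `G₂` realized inside `so₈`. -/
def Mg2 (F : Type*) [Field F] (T₁ T₂ a b c d e f g h i j k l : F) :
    Matrix (Fin 8) (Fin 8) F :=
  !![T₁, a, c, d, d, e, f, 0;
     g, T₂ - T₁, b, -c, -c, d, 0, -f;
     h, l, 2*T₁ - T₂, a, a, 0, -d, -e;
     i, -h, g, 0, 0, -a, c, -d;
     i, -h, g, 0, 0, -a, c, -d;
     j, i, 0, -g, -g, T₂ - 2*T₁, -b, -c;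
     k, 0, -i, h, h, -l, T₁ - T₂, -a;
     0, -k, -j, -i, -i, -h, -g, -T₁]

@[simp] private lemma cv_2_1 {α : Type*} (x : α) (u : Fin 1 → α) :
    (Matrix.vecCons x u : Fin 2 → α) 1 = u 0 := rfl
@[simp] private lemma cv_3_1 {α : Type*} (x : α) (u : Fin 2 → α) :
    (Matrix.vecCons x u : Fin 3 → α) 1 = u 0 := rfl
@[simp] private lemma cv_3_2 {α : Type*} (x : α) (u : Fin 2 → α) :
    (Matrix.vecCons x u : Fin 3 → α) 2 = u 1 := rfl
@[simp] private lemma cv_4_1 {α : Type*} (x : α) (u : Fin 3 → α) :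
    (Matrix.vecCons x u : Fin 4 → α) 1 = u 0 := rfl
@[simp] private lemma cv_4_2 {α : Type*} (x : α) (u : Fin 3 → α) :
    (Matrix.vecCons x u : Fin 4 → α) 2 = u 1 := rfl
@[simp] private lemma cv_4_3 {α : Type*} (x : α) (u : Fin 3 → α) :
    (Matrix.vecCons x u : Fin 4 → α) 3 = u 2 := rfl
@[simp] private lemma cv_5_1 {α : Type*} (x : α) (u : Fin 4 → α) :
    (Matrix.vecCons x u : Fin 5 → α) 1 = u 0 := rfl
@[simp] private lemma cv_5_2 {α : Type*} (x : α) (u : Fin 4 → α) :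
    (Matrix.vecCons x u : Fin 5 → α) 2 = u 1 := rfl
@[simp] private lemma cv_5_3 {α : Type*} (x : α) (u : Fin 4 → α) :
    (Matrix.vecCons x u : Fin 5 → α) 3 = u 2 := rfl
@[simp] private lemma cv_5_4 {α : Type*} (x : α) (u : Fin 4 → α) :
    (Matrix.vecCons x u : Fin 5 → α) 4 = u 3 := rfl
@[simp] private lemma cv_6_1 {α : Type*} (x : α) (u : Fin 5 → α) :
    (Matrix.vecCons x u : Fin 6 → α) 1 = u 0 := rfl
@[simp] private lemma cv_6_2 {α : Type*} (x : α) (u : Fin 5 → α) :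
    (Matrix.vecCons x u : Fin 6 → α) 2 = u 1 := rfl
@[simp] private lemma cv_6_3 {α : Type*} (x : α) (u : Fin 5 → α) :
    (Matrix.vecCons x u : Fin 6 → α) 3 = u 2 := rfl
@[simp] private lemma cv_6_4 {α : Type*} (x : α) (u : Fin 5 → α) :
    (Matrix.vecCons x u : Fin 6 → α) 4 = u 3 := rfl
@[simp] private lemma cv_6_5 {α : Type*} (x : α) (u : Fin 5 → α) :
    (Matrix.vecCons x u : Fin 6 → α) 5 = u 4 := rfl
@[simp] private lemma cv_7_1 {α : Type*} (x : α) (u : Fin 6 → α) :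
    (Matrix.vecCons x u : Fin 7 → α) 1 = u 0 := rfl
@[simp] private lemma cv_7_2 {α : Type*} (x : α) (u : Fin 6 → α) :
    (Matrix.vecCons x u : Fin 7 → α) 2 = u 1 := rfl
@[simp] private lemma cv_7_3 {α : Type*} (x : α) (u : Fin 6 → α) :
    (Matrix.vecCons x u : Fin 7 → α) 3 = u 2 := rfl
@[simp] private lemma cv_7_4 {α : Type*} (x : α) (u : Fin 6 → α) :
    (Matrix.vecCons x u : Fin 7 → α) 4 = u 3 := rfl
@[simp] private lemma cv_7_5 {α : Type*} (x : α) (u : Fin 6 → α) :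
    (Matrix.vecCons x u : Fin 7 → α) 5 = u 4 := rfl
@[simp] private lemma cv_7_6 {α : Type*} (x : α) (u : Fin 6 → α) :
    (Matrix.vecCons x u : Fin 7 → α) 6 = u 5 := rfl
@[simp] private lemma cv_8_1 {α : Type*} (x : α) (u : Fin 7 → α) :
    (Matrix.vecCons x u : Fin 8 → α) 1 = u 0 := rfl
@[simp] private lemma cv_8_2 {α : Type*} (x : α) (u : Fin 7 → α) :
    (Matrix.vecCons x u : Fin 8 → α) 2 = u 1 := rfl
@[simp] private lemma cv_8_3 {α : Type*} (x : α) (u : Fin 7 → α) :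
    (Matrix.vecCons x u : Fin 8 → α) 3 = u 2 := rfl
@[simp] private lemma cv_8_4 {α : Type*} (x : α) (u : Fin 7 → α) :
    (Matrix.vecCons x u : Fin 8 → α) 4 = u 3 := rfl
@[simp] private lemma cv_8_5 {α : Type*} (x : α) (u : Fin 7 → α) :
    (Matrix.vecCons x u : Fin 8 → α) 5 = u 4 := rfl
@[simp] private lemma cv_8_6 {α : Type*} (x : α) (u : Fin 7 → α) :
    (Matrix.vecCons x u : Fin 8 → α) 6 = u 5 := rfl
@[simp] private lemma cv_8_7 {α : Type*} (x : α) (u : Fin 7 → α) :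
    (Matrix.vecCons x u : Fin 8 → α) 7 = u 6 := rfl

/-- The general `G₂` Lie algebra element `M` annihilates `v_ρ` iff
`T₂ = 2T₁`, `b = −ρd`, `c = −ρe`, `g = ρa`, `i = −ρl`, `j = −ρh`.
This characterizes the Lie algebra `su(2,1)` inside `g₂`. -/
theorem stmt9 (F : Type*) [Field F] (ρ : F) (T₁ T₂ a b c d e f g h i j k l : F) :
    (Mg2 F T₁ T₂ a b c d e f g h i j k l).mulVec (vrho F ρ) = 0 ↔
      (T₂ = 2 * T₁ ∧ b = -(ρ * d) ∧ c = -(ρ * e) ∧ g = ρ * a ∧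
        i = -(ρ * l) ∧ j = -(ρ * h)) := by
  have key : (Mg2 F T₁ T₂ a b c d e f g h i j k l).mulVec (vrho F ρ) =
      ![c + ρ*e, b + ρ*d, 2*T₁ - T₂, g - ρ*a, g - ρ*a, ρ*(T₂ - 2*T₁), -i - ρ*l, -j - ρ*h] := by
    funext x
    fin_cases x <;>
      simp [Mg2, vrho, mulVec, dotProduct, Fin.sum_univ_succ, Matrix.cons_val_zero, Matrix.cons_val_succ] <;> ring
  rw [key]
  constructor
  · intro hv
    have h0 := congrFun hv 0
    have h1 := congrFun hv 1
    have h2 := congrFun hv 2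
    have h3 := congrFun hv 3
    have h6 := congrFun hv 6
    have h7 := congrFun hv 7
    simp at h0 h1 h2 h3 h6 h7
    refine ⟨by linear_combination -h2, by linear_combination h1, by linear_combination h0,
      by linear_combination h3, by linear_combination -h6, by linear_combination -h7⟩
  · rintro ⟨e1, e2, e3, e4, e5, e6⟩
    subst e1 e2 e3 e4 e5 e6
    funext x
    fin_cases x <;> simp <;> ring
end
end
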